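/- As ε → 0⁺, the normalized eigenvector of the case-study matrix A(ε) associated with the eigenvalue near 4 converges to (1,3,6,6)ᵀ/‖(1,3,6,6)‖₂, whereas the corresponding eigenvector of the balanced matrix Ã(ε) converges to the coordinate vector e₄. -/

import Mathlib

open Filter Real

/-- If the first three components of `v` are given multiples of the (positive) last
component and `v` has unit norm, then `v` has an explicit closed form. -/
lemma case_study_aux_vec (v : Fin 4 → ℝ) (a b c : ℝ)
    (h0 : v 0 = a * v 3) (h1 : v 1 = b * v 3) (h2 : v 2 = c * v 3)
    (hn : Real.sqrt (∑ i, (v i) ^ 2) = 1) (h3 : 0 < v 3) :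
    v = (Real.sqrt (a^2 + b^2 + c^2 + 1))⁻¹ • ![a, b, c, 1] := by
  have hS : (0:ℝ) < a^2 + b^2 + c^2 + 1 := by positivity
  have hsum : ∑ i, (v i) ^ 2 = 1 := by
    have := congrArg (· ^ 2) hn
    simpa [Real.sq_sqrt (by positivity : (0:ℝ) ≤ ∑ i, (v i)^2)] using this
  have hv3 : (a^2 + b^2 + c^2 + 1) * (v 3)^2 = 1 := by
    rw [Fin.sum_univ_four, h0, h1, h2] at hsum
    linear_combination hsum
  have hsq : (Real.sqrt (a^2+b^2+c^2+1) * v 3) ^ 2 = 1 := by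
    rw [mul_pow, Real.sq_sqrt hS.le]; exact hv3
  have hpos : 0 < Real.sqrt (a^2+b^2+c^2+1) * v 3 :=
    mul_pos (Real.sqrt_pos.mpr hS) h3
  have hone : Real.sqrt (a^2+b^2+c^2+1) * v 3 = 1 := by
    nlinarith
  have hv3' : v 3 = (Real.sqrt (a^2+b^2+c^2+1))⁻¹ :=
    eq_inv_of_mul_eq_one_right (by linarith [hone, mul_comm (Real.sqrt (a^2+b^2+c^2+1)) (v 3)])
  funext i
  fin_cases i <;>
    simp [h0, h1, h2, hv3', Matrix.cons_val_zero, Matrix.cons_val_one] <;> ring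

/-- Limits of vector families of the closed form from `case_study_aux_vec`. -/
lemma case_study_aux_tendsto {f : ℝ → Fin 4 → ℝ} {a b c : ℝ → ℝ} {l : Filter ℝ} {a0 b0 c0 : ℝ}
    (ha : Tendsto a l (nhds a0)) (hb : Tendsto b l (nhds b0)) (hc : Tendsto c l (nhds c0))
    (hf : ∀ᶠ ε in l, f ε = (Real.sqrt ((a ε)^2 + (b ε)^2 + (c ε)^2 + 1))⁻¹ • ![a ε, b ε, c ε, 1]) :
    Tendsto f l (nhds ((Real.sqrt (a0^2 + b0^2 + c0^2 + 1))⁻¹ • ![a0, b0, c0, 1])) := by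
  have hS : Tendsto (fun ε => (Real.sqrt ((a ε)^2 + (b ε)^2 + (c ε)^2 + 1))⁻¹) l
      (nhds ((Real.sqrt (a0^2 + b0^2 + c0^2 + 1))⁻¹)) := by
    refine Filter.Tendsto.inv₀ (Filter.Tendsto.sqrt ?_) ?_
    · exact (((ha.pow 2).add (hb.pow 2)).add (hc.pow 2)).add tendsto_const_nhds
    · have : (0:ℝ) < a0^2 + b0^2 + c0^2 + 1 := by positivity
      positivity
  refine Tendsto.congr' (Filter.EventuallyEq.symm hf) ?_
  rw [tendsto_pi_nhds]
  intro i
  fin_cases i <;> simp only [Pi.smul_apply, Matrix.cons_val_zero, Matrix.cons_val_one,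
    Matrix.head_cons, Matrix.cons_val_two, Matrix.tail_cons, Matrix.cons_val_three,
    smul_eq_mul]
  · exact hS.mul ha
  · exact hS.mul hb
  · exact hS.mul hc
  · exact hS.mul tendsto_const_nhds

/-- As `ε → 0⁺`, any family of unit eigenvectors (normalized to positive last
component) of the case-study matrix `A(ε)` for the eigenvalue
`λ₄(ε) = ½(5+√(5+4√(1+ε)))` converges to `(1,3,6,6)ᵀ/‖(1,3,6,6)‖₂`, while the
corresponding eigenvectors of the balanced matrix `Ã(ε)` converge to `e₄`. -/
theorem case_study_eigenvector_limits
    (A At : ℝ → Matrix (Fin 4) (Fin 4) ℝ)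
    (hA : ∀ ε, A ε = !![1, 1, 0, 0; 0, 2, 1, 0; 0, 0, 3, 1; ε, 0, 0, 4])
    (hAt : ∀ ε, At ε = !![1, ε ^ ((1:ℝ)/4), 0, 0; 0, 2, ε ^ ((1:ℝ)/4), 0;
                          0, 0, 3, ε ^ ((1:ℝ)/4); ε ^ ((1:ℝ)/4), 0, 0, 4])
    (lam : ℝ → ℝ)
    (hlam : ∀ ε, lam ε = (5 + Real.sqrt (5 + 4 * Real.sqrt (1 + ε))) / 2)
    (v w : ℝ → (Fin 4 → ℝ))
    (hv : ∀ ε ∈ Set.Ioi (0 : ℝ),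
      Matrix.mulVec (A ε) (v ε) = lam ε • v ε ∧
      Real.sqrt (∑ i, (v ε i) ^ 2) = 1 ∧ 0 < v ε 3)
    (hw : ∀ ε ∈ Set.Ioi (0 : ℝ),
      Matrix.mulVec (At ε) (w ε) = lam ε • w ε ∧
      Real.sqrt (∑ i, (w ε i) ^ 2) = 1 ∧ 0 < w ε 3) :
    Filter.Tendsto v (nhdsWithin 0 (Set.Ioi 0))
      (nhds ((Real.sqrt (∑ i, ((![1, 3, 6, 6] : Fin 4 → ℝ) i) ^ 2))⁻¹ • ![1, 3, 6, 6])) ∧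
    Filter.Tendsto w (nhdsWithin 0 (Set.Ioi 0)) (nhds ![0, 0, 0, 1]) := by
  -- the eigenvalue exceeds 4 on `Ioi 0`
  have hl4 : ∀ ε ∈ Set.Ioi (0:ℝ), 4 < lam ε := by
    intro ε hε
    rw [hlam]
    have h1 : (1:ℝ) < Real.sqrt (1 + ε) := by
      rw [Real.lt_sqrt (by norm_num)]
      nlinarith [hε.out]
    have h2 : (3:ℝ) < Real.sqrt (5 + 4 * Real.sqrt (1 + ε)) := by
      rw [Real.lt_sqrt (by norm_num)]
      nlinarith
    linarith
  -- the eigenvalue tends to 4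
  have tlam : Tendsto lam (nhdsWithin 0 (Set.Ioi 0)) (nhds 4) := by
    have hc : ContinuousAt (fun ε : ℝ => (5 + Real.sqrt (5 + 4 * Real.sqrt (1 + ε))) / 2) 0 := by
      fun_prop
    have hval : ((5 + Real.sqrt (5 + 4 * Real.sqrt (1 + 0))) / 2 : ℝ) = 4 := by
      rw [show (1:ℝ) + 0 = 1 by norm_num, Real.sqrt_one,
        show (5:ℝ) + 4 * 1 = 3^2 by norm_num, Real.sqrt_sq (by norm_num)]
      norm_num
    have h := hc.tendsto
    rw [hval] at h
    have h' : Tendsto (fun ε : ℝ => (5 + Real.sqrt (5 + 4 * Real.sqrt (1 + ε))) / 2)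
        (nhdsWithin 0 (Set.Ioi 0)) (nhds 4) := h.mono_left nhdsWithin_le_nhds
    exact (funext hlam : lam = _) ▸ h'
  -- `ε ^ (1/4)` tends to 0
  have tt : Tendsto (fun ε : ℝ => ε ^ ((1:ℝ)/4)) (nhdsWithin 0 (Set.Ioi 0)) (nhds 0) := by
    have hc : ContinuousAt (fun ε : ℝ => ε ^ ((1:ℝ)/4)) 0 :=
      Real.continuousAt_rpow_const 0 ((1:ℝ)/4) (Or.inr (by norm_num))
    have h := hc.tendsto
    rw [Real.zero_rpow (by norm_num : (1:ℝ)/4 ≠ 0)] at h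
    exact h.mono_left nhdsWithin_le_nhds
  constructor
  · -- the original matrix
    have hev : ∀ᶠ ε in nhdsWithin 0 (Set.Ioi 0),
        v ε = (Real.sqrt ((((lam ε-1)*(lam ε-2)*(lam ε-3))⁻¹)^2
            + (((lam ε-2)*(lam ε-3))⁻¹)^2 + ((lam ε-3)⁻¹)^2 + 1))⁻¹ •
          ![((lam ε-1)*(lam ε-2)*(lam ε-3))⁻¹, ((lam ε-2)*(lam ε-3))⁻¹, (lam ε-3)⁻¹, 1] := by
      refine Filter.eventually_of_mem self_mem_nhdsWithin (fun ε hε => ?_)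
      obtain ⟨heig, hn, h3⟩ := hv ε hε
      rw [hA] at heig
      have hl := hl4 ε hε
      set l := lam ε with hldef
      have e0 := congrFun heig 0
      have e1 := congrFun heig 1
      have e2 := congrFun heig 2
      simp [Matrix.mulVec, dotProduct, Fin.sum_univ_four] at e0 e1 e2
      have h1ne : l - 1 ≠ 0 := by linarith
      have h2ne : l - 2 ≠ 0 := by linarith
      have h3ne : l - 3 ≠ 0 := by linarith
      refine case_study_aux_vec (v ε) _ _ _ ?_ ?_ ?_ hn h3
      · field_simp
        linear_combination -(l-2)*(l-3)*e0 - (l-3)*e1 - e2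
      · field_simp
        linear_combination -(l-3)*e1 - e2
      · field_simp
        linear_combination -e2
    have ht := case_study_aux_tendsto
      (a := fun ε => ((lam ε-1)*(lam ε-2)*(lam ε-3))⁻¹)
      (b := fun ε => ((lam ε-2)*(lam ε-3))⁻¹)
      (c := fun ε => (lam ε-3)⁻¹)
      (a0 := ((4-1)*(4-2)*(4-3) : ℝ)⁻¹) (b0 := ((4-2)*(4-3) : ℝ)⁻¹) (c0 := ((4:ℝ)-3)⁻¹)
      (Filter.Tendsto.inv₀
        (((tlam.sub_const 1).mul (tlam.sub_const 2)).mul (tlam.sub_const 3)) (by norm_num))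
      (Filter.Tendsto.inv₀ ((tlam.sub_const 2).mul (tlam.sub_const 3)) (by norm_num))
      (Filter.Tendsto.inv₀ (tlam.sub_const 3) (by norm_num))
      hev
    convert ht using 2
    have h36 : Real.sqrt ((((4-1)*(4-2)*(4-3) : ℝ)⁻¹)^2 + (((4-2)*(4-3) : ℝ)⁻¹)^2
        + (((4:ℝ)-3)⁻¹)^2 + 1) = Real.sqrt 82 / 6 := by
      rw [show (((4-1)*(4-2)*(4-3) : ℝ)⁻¹)^2 + (((4-2)*(4-3) : ℝ)⁻¹)^2
          + (((4:ℝ)-3)⁻¹)^2 + 1 = 82/36 by norm_num,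
        Real.sqrt_div (by norm_num : (0:ℝ) ≤ 82) 36,
        show (36:ℝ) = 6^2 by norm_num, Real.sqrt_sq (by norm_num)]
    have hsum : (∑ i, ((![1, 3, 6, 6] : Fin 4 → ℝ) i) ^ 2) = 82 := by
      simp [Fin.sum_univ_four]
      norm_num
    rw [hsum, h36]
    have h82 : Real.sqrt 82 ≠ 0 := by positivity
    funext i
    fin_cases i <;>
      simp only [Pi.smul_apply, Matrix.cons_val_zero, Matrix.cons_val_one, Matrix.head_cons,
        Matrix.cons_val_two, Matrix.tail_cons, Matrix.cons_val_three, smul_eq_mul] <;>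
      field_simp <;> ring <;> simp <;> norm_num
  · -- the balanced matrix
    have hev : ∀ᶠ ε in nhdsWithin 0 (Set.Ioi 0),
        w ε = (Real.sqrt (((ε ^ ((1:ℝ)/4))^3 * ((lam ε-1)*(lam ε-2)*(lam ε-3))⁻¹)^2
            + ((ε ^ ((1:ℝ)/4))^2 * ((lam ε-2)*(lam ε-3))⁻¹)^2
            + (ε ^ ((1:ℝ)/4) * (lam ε-3)⁻¹)^2 + 1))⁻¹ •
          ![(ε ^ ((1:ℝ)/4))^3 * ((lam ε-1)*(lam ε-2)*(lam ε-3))⁻¹,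
            (ε ^ ((1:ℝ)/4))^2 * ((lam ε-2)*(lam ε-3))⁻¹,
            ε ^ ((1:ℝ)/4) * (lam ε-3)⁻¹, 1] := by
      refine Filter.eventually_of_mem self_mem_nhdsWithin (fun ε hε => ?_)
      obtain ⟨heig, hn, h3⟩ := hw ε hε
      rw [hAt] at heig
      have hl := hl4 ε hε
      set l := lam ε with hldef
      have e0 := congrFun heig 0
      have e1 := congrFun heig 1
      have e2 := congrFun heig 2
      simp [Matrix.mulVec, dotProduct, Fin.sum_univ_four] at e0 e1 e2
      rw [show (4:ℝ)⁻¹ = 1/4 by norm_num] at e0 e1 e2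
      set t := ε ^ ((1:ℝ)/4) with ht
      have h1ne : l - 1 ≠ 0 := by linarith
      have h2ne : l - 2 ≠ 0 := by linarith
      have h3ne : l - 3 ≠ 0 := by linarith
      refine case_study_aux_vec (w ε) _ _ _ ?_ ?_ ?_ hn h3
      · field_simp
        linear_combination -(l-2)*(l-3)*e0 - t*(l-3)*e1 - t^2*e2
      · field_simp
        linear_combination -(l-3)*e1 - t*e2
      · field_simp
        linear_combination -e2
    have ta : Tendsto (fun ε => (ε ^ ((1:ℝ)/4))^3 * ((lam ε-1)*(lam ε-2)*(lam ε-3))⁻¹)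
        (nhdsWithin 0 (Set.Ioi 0)) (nhds 0) := by
      have := (tt.pow 3).mul (Filter.Tendsto.inv₀
        (((tlam.sub_const 1).mul (tlam.sub_const 2)).mul (tlam.sub_const 3))
        (by norm_num : ((4:ℝ)-1)*(4-2)*(4-3) ≠ 0))
      simpa using this
    have tb : Tendsto (fun ε => (ε ^ ((1:ℝ)/4))^2 * ((lam ε-2)*(lam ε-3))⁻¹)
        (nhdsWithin 0 (Set.Ioi 0)) (nhds 0) := by
      have := (tt.pow 2).mul (Filter.Tendsto.inv₀
        ((tlam.sub_const 2).mul (tlam.sub_const 3))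
        (by norm_num : ((4:ℝ)-2)*(4-3) ≠ 0))
      simpa using this
    have tc : Tendsto (fun ε => ε ^ ((1:ℝ)/4) * (lam ε-3)⁻¹)
        (nhdsWithin 0 (Set.Ioi 0)) (nhds 0) := by
      have := tt.mul (Filter.Tendsto.inv₀ (tlam.sub_const 3)
        (by norm_num : (4:ℝ)-3 ≠ 0))
      simpa using this
    have ht := case_study_aux_tendsto ta tb tc hev
    convert ht using 2
    rw [show (0:ℝ)^2 + 0^2 + 0^2 + 1 = 1 by norm_num, Real.sqrt_one]
    funext i
    fin_cases i <;> simp
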